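/- Under the exponential growth conditions $\alpha_n = \xi n^t(1+\xi_n)$, $\beta_n = \zeta n^t(1+\zeta_n)+\eta_n$ with $\xi \neq 0$, $\zeta \geq 0$, $0 \leq t \leq 1$, $\xi_n,\zeta_n,\eta_n \to 0$, for every $\varepsilon > 0$ there exists $K_0(\varepsilon)$ (independent of $k$ and $n$) and a constant $d_0 > 0$ (independent of $k$, $n$, $\varepsilon$) such that $|M_n^{(k)}| \leq d_0^k (\varepsilon k)^{kt}$ for all $k, n \geq K_0(\varepsilon)$. -/

import Mathlib

open MeasureTheory Polynomial Filter

noncomputable def cInt (ϖ : ℝ → ℝ) (p : ℕ → Polynomial ℝ) (k j m : ℕ) : ℝ :=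
  ∫ x : ℝ, Polynomial.eval x (Polynomial.X ^ k * p j * p m) * ϖ x

lemma integ_add (ϖ : ℝ → ℝ)
    (hint : ∀ q : Polynomial ℝ, Integrable (fun x => q.eval x * ϖ x))
    (q r : Polynomial ℝ) :
    ∫ x : ℝ, (q + r).eval x * ϖ x = (∫ x : ℝ, q.eval x * ϖ x) + ∫ x : ℝ, r.eval x * ϖ x := by
  simp only [Polynomial.eval_add, add_mul]
  exact integral_add (hint q) (hint r)

lemma integ_smul (ϖ : ℝ → ℝ) (a : ℝ) (q : Polynomial ℝ) :
    ∫ x : ℝ, (Polynomial.C a * q).eval x * ϖ x = a * ∫ x : ℝ, q.eval x * ϖ x := by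
  simp only [Polynomial.eval_mul, Polynomial.eval_C, mul_assoc]
  exact integral_const_mul a _

lemma cInt_zero (ϖ : ℝ → ℝ) (p : ℕ → Polynomial ℝ)
    (horth : ∀ m n, (∫ x : ℝ, (p m).eval x * (p n).eval x * ϖ x)
      = if m = n then 1 else 0) (j m : ℕ) :
    cInt ϖ p 0 j m = if j = m then 1 else 0 := by
  unfold cInt
  simp only [pow_zero, one_mul, Polynomial.eval_mul]
  exact horth j m

lemma cInt_rec (ϖ : ℝ → ℝ)
    (hint : ∀ q : Polynomial ℝ, Integrable (fun x => q.eval x * ϖ x))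
    (p : ℕ → Polynomial ℝ) (α β : ℕ → ℝ)
    (hrec : ∀ n, Polynomial.X * p n =
      Polynomial.C (α n) * p (n + 1) + Polynomial.C (β n) * p n +
        (if n = 0 then 0 else Polynomial.C (α (n - 1)) * p (n - 1)))
    (k j m : ℕ) :
    cInt ϖ p (k+1) j m = α m * cInt ϖ p k j (m+1) + β m * cInt ϖ p k j m +
      (if m = 0 then 0 else α (m-1) * cInt ϖ p k j (m-1)) := by
  unfold cInt
  rcases Nat.eq_zero_or_pos m with hm | hm
  · subst hm
    have h := hrec 0
    simp only [eq_self_iff_true, if_true, ite_true, add_zero] at h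
    have h1 : Polynomial.X ^ (k+1) * p j * p 0 =
        Polynomial.C (α 0) * (Polynomial.X ^ k * p j * p 1) +
        Polynomial.C (β 0) * (Polynomial.X ^ k * p j * p 0) := by
      have : Polynomial.X ^ (k+1) * p j * p 0 =
          (Polynomial.X ^ k * p j) * (Polynomial.X * p 0) := by ring
      rw [this, h]; ring
    rw [h1, integ_add ϖ hint, integ_smul, integ_smul]
    simp
  · have hm0 : m ≠ 0 := hm.ne'
    have h := hrec m
    rw [if_neg hm0] at h
    have h1 : Polynomial.X ^ (k+1) * p j * p m =
        Polynomial.C (α m) * (Polynomial.X ^ k * p j * p (m+1)) +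
        Polynomial.C (β m) * (Polynomial.X ^ k * p j * p m) +
        Polynomial.C (α (m-1)) * (Polynomial.X ^ k * p j * p (m-1)) := by
      have h2 : Polynomial.X ^ (k+1) * p j * p m =
          (Polynomial.X ^ k * p j) * (Polynomial.X * p m) := by ring
      rw [h2, h]; ring
    rw [h1, integ_add ϖ hint, integ_add ϖ hint, integ_smul, integ_smul, integ_smul,
      if_neg hm0]


lemma cvanish (c : ℕ → ℕ → ℕ → ℝ) (α β : ℕ → ℝ) (j : ℕ)
    (hbase : ∀ m, c 0 j m = if j = m then 1 else 0)
    (hstep : ∀ k m, c (k+1) j m = α m * c k j (m+1) + β m * c k j m +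
      (if m = 0 then 0 else α (m-1) * c k j (m-1))) :
    ∀ k m, j + k < m → c k j m = 0 := by
  intro k
  induction k with
  | zero => intro m hm; rw [hbase]; rw [if_neg]; omega
  | succ k ih =>
    intro m hm
    rw [hstep]
    rw [ih (m+1) (by omega), ih m (by omega)]
    rcases Nat.eq_zero_or_pos m with h0 | h0
    · omega
    · rw [if_neg h0.ne', ih (m-1) (by omega)]
      ring

lemma cbound (c : ℕ → ℕ → ℕ → ℝ) (α β : ℕ → ℝ) (j K : ℕ)
    (hbase : ∀ m, c 0 j m = if j = m then 1 else 0)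
    (hstep : ∀ k m, c (k+1) j m = α m * c k j (m+1) + β m * c k j m +
      (if m = 0 then 0 else α (m-1) * c k j (m-1)))
    (A : ℝ) (hA0 : 0 ≤ A)
    (hA : ∀ i, i ≤ j + K → |α i| ≤ A ∧ |β i| ≤ A) :
    ∀ k, k ≤ K → ∀ m, |c k j m| ≤ (3*A)^k := by
  intro k
  induction k with
  | zero =>
    intro _ m; rw [hbase, pow_zero]
    split <;> simp
  | succ k ih =>
    intro hkK m
    have hk : k ≤ K := by omega
    by_cases hm : j + (k+1) < m
    · rw [cvanish c α β j hbase hstep (k+1) m hm]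
      simp only [abs_zero]
      positivity
    · push_neg at hm
      have hmK : m ≤ j + K := by omega
      have h1 : |α m| ≤ A := (hA m hmK).1
      have h2 : |β m| ≤ A := (hA m hmK).2
      have hpow : (0:ℝ) ≤ (3*A)^k := by positivity
      rw [hstep]
      have e1 : |α m * c k j (m+1)| ≤ A * (3*A)^k := by
        rw [abs_mul]
        exact mul_le_mul h1 (ih hk (m+1)) (abs_nonneg _) hA0
      have e2 : |β m * c k j m| ≤ A * (3*A)^k := by
        rw [abs_mul]
        exact mul_le_mul h2 (ih hk m) (abs_nonneg _) hA0
      have e3 : |if m = 0 then (0:ℝ) else α (m-1) * c k j (m-1)| ≤ A * (3*A)^k := by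
        split
        · simp; positivity
        · rw [abs_mul]
          have h3 : |α (m-1)| ≤ A := (hA (m-1) (by omega)).1
          exact mul_le_mul h3 (ih hk (m-1)) (abs_nonneg _) hA0
      calc |α m * c k j (m+1) + β m * c k j m +
            (if m = 0 then 0 else α (m-1) * c k j (m-1))|
          ≤ |α m * c k j (m+1) + β m * c k j m| +
            |if m = 0 then (0:ℝ) else α (m-1) * c k j (m-1)| := abs_add_le _ _
        _ ≤ |α m * c k j (m+1)| + |β m * c k j m| +
            |if m = 0 then (0:ℝ) else α (m-1) * c k j (m-1)| := by
            gcongr; exact abs_add_le _ _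
        _ ≤ A * (3*A)^k + A * (3*A)^k + A * (3*A)^k := by gcongr
        _ = (3*A)^(k+1) := by ring


lemma ctwo (c : ℕ → ℕ → ℕ → ℝ) (α β : ℕ → ℝ) (j : ℕ)
    (hbase : ∀ m, c 0 j m = if j = m then 1 else 0)
    (hstep : ∀ k m, c (k+1) j m = α m * c k j (m+1) + β m * c k j m +
      (if m = 0 then 0 else α (m-1) * c k j (m-1))) :
    c 2 j j = α j ^ 2 + β j ^ 2 + (if j = 0 then 0 else α (j-1) ^ 2) := by
  have b0 : ∀ m, j ≠ m → c 0 j m = 0 := fun m h => by rw [hbase, if_neg h]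
  have bjj : c 0 j j = 1 := by rw [hbase, if_pos rfl]
  have h1a : c 1 j (j+1) = α j := by
    rw [hstep, b0 (j+1+1) (by omega), b0 (j+1) (by omega), if_neg (by omega : j+1 ≠ 0)]
    simp only [Nat.add_sub_cancel, bjj]
    ring
  have h1b : c 1 j j = β j := by
    rw [hstep, b0 (j+1) (by omega), bjj]
    rcases Nat.eq_zero_or_pos j with h0 | h0
    · rw [if_pos h0]; ring
    · rw [if_neg h0.ne', b0 (j-1) (by omega)]; ring
  rcases Nat.eq_zero_or_pos j with h0 | h0
  · subst h0
    rw [hstep, h1a, h1b, if_pos rfl, if_pos rfl]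
    ring
  · have h1c : c 1 j (j-1) = α (j-1) := by
      rw [hstep]
      rw [show j - 1 + 1 = j by omega, bjj, b0 (j-1) (by omega)]
      rcases Nat.eq_zero_or_pos (j-1) with h1 | h1
      · rw [if_pos h1]; ring
      · rw [if_neg h1.ne', b0 (j-1-1) (by omega)]; ring
    rw [hstep, h1a, h1b, if_neg h0.ne', h1c, if_neg h0.ne']
    ring


lemma coeff_bound (α β ξe ζe ηe : ℕ → ℝ) (ξ ζ t : ℝ) (ht0 : 0 ≤ t) (hζ : 0 ≤ ζ)
    (hα : ∀ n, α n = ξ * (n : ℝ) ^ t * (1 + ξe n))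
    (hβ : ∀ n, β n = ζ * (n : ℝ) ^ t * (1 + ζe n) + ηe n)
    (hξe : Tendsto ξe atTop (nhds 0))
    (hζe : Tendsto ζe atTop (nhds 0))
    (hηe : Tendsto ηe atTop (nhds 0)) :
    ∃ d₁ : ℝ, 0 < d₁ ∧ ∀ n, |α n| ≤ d₁ * ((n:ℝ)+1)^t ∧ |β n| ≤ d₁ * ((n:ℝ)+1)^t := by
  have hone : ∀ n : ℕ, (1:ℝ) ≤ ((n:ℝ)+1)^t := fun n =>
    Real.one_le_rpow (by have : (0:ℝ) ≤ (n:ℝ) := Nat.cast_nonneg n; linarith) ht0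
  have hmono : ∀ n : ℕ, ((n:ℝ))^t ≤ ((n:ℝ)+1)^t := fun n =>
    Real.rpow_le_rpow (Nat.cast_nonneg n) (by linarith) ht0
  obtain ⟨N1, hN1⟩ := (Metric.tendsto_atTop.mp hξe 1 one_pos)
  obtain ⟨N2, hN2⟩ := (Metric.tendsto_atTop.mp hζe 1 one_pos)
  obtain ⟨N3, hN3⟩ := (Metric.tendsto_atTop.mp hηe 1 one_pos)
  set N := max N1 (max N2 N3) with hN
  set C0 := ∑ i ∈ Finset.range N, (|α i| + |β i|) with hC0
  have hC0nn : 0 ≤ C0 := Finset.sum_nonneg fun i _ => by positivity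
  set d₁ := 2*|ξ| + 2*ζ + 1 + C0 with hd₁
  have hd₁pos : 0 < d₁ := by positivity
  refine ⟨d₁, hd₁pos, fun n => ?_⟩
  by_cases hn : N ≤ n
  · have e1 : |ξe n| < 1 := by
      have := hN1 n (le_trans (le_max_left _ _) hn)
      rwa [Real.dist_eq, sub_zero] at this
    have e2 : |ζe n| < 1 := by
      have := hN2 n (le_trans (le_trans (le_max_left _ _) (le_max_right _ _)) hn)
      rwa [Real.dist_eq, sub_zero] at this
    have e3 : |ηe n| < 1 := by
      have := hN3 n (le_trans (le_trans (le_max_right _ _) (le_max_right _ _)) hn)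
      rwa [Real.dist_eq, sub_zero] at this
    have hnt : (0:ℝ) ≤ (n:ℝ)^t := Real.rpow_nonneg (Nat.cast_nonneg n) t
    have habs1 : |1 + ξe n| ≤ 2 := by
      calc |1 + ξe n| ≤ |(1:ℝ)| + |ξe n| := abs_add_le _ _
        _ ≤ 2 := by rw [abs_one]; linarith
    have habs2 : |1 + ζe n| ≤ 2 := by
      calc |1 + ζe n| ≤ |(1:ℝ)| + |ζe n| := abs_add_le _ _
        _ ≤ 2 := by rw [abs_one]; linarith
    constructor
    · rw [hα n, abs_mul, abs_mul, abs_of_nonneg hnt]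
      calc |ξ| * (n:ℝ)^t * |1 + ξe n| ≤ |ξ| * (n:ℝ)^t * 2 := by
            apply mul_le_mul_of_nonneg_left habs1 (by positivity)
        _ = 2*|ξ| * (n:ℝ)^t := by ring
        _ ≤ 2*|ξ| * ((n:ℝ)+1)^t := by
            apply mul_le_mul_of_nonneg_left (hmono n) (by positivity)
        _ ≤ d₁ * ((n:ℝ)+1)^t := by
            apply mul_le_mul_of_nonneg_right _ (by positivity)
            rw [hd₁]; linarith
    · rw [hβ n]
      calc |ζ * (n:ℝ)^t * (1 + ζe n) + ηe n|
          ≤ |ζ * (n:ℝ)^t * (1 + ζe n)| + |ηe n| := abs_add_le _ _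
        _ ≤ ζ * (n:ℝ)^t * 2 + 1 := by
            rw [abs_mul, abs_mul, abs_of_nonneg hζ, abs_of_nonneg hnt]
            have := mul_le_mul_of_nonneg_left habs2 (by positivity : (0:ℝ) ≤ ζ * (n:ℝ)^t)
            linarith
        _ ≤ ζ * ((n:ℝ)+1)^t * 2 + ((n:ℝ)+1)^t := by
            have := mul_le_mul_of_nonneg_left (hmono n) hζ
            have h1 := hone n
            nlinarith
        _ ≤ d₁ * ((n:ℝ)+1)^t := by
            have h1 := hone n
            rw [hd₁]; nlinarith [abs_nonneg ξ, hC0nn]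
  · push_neg at hn
    have hmem : n ∈ Finset.range N := Finset.mem_range.mpr hn
    have hle : |α n| + |β n| ≤ C0 := by
      rw [hC0]
      exact Finset.single_le_sum (f := fun i => |α i| + |β i|)
        (fun i _ => by positivity) hmem
    have h1 := hone n
    constructor
    · calc |α n| ≤ C0 := by cases abs_nonneg (β n) |>.lt_or_eq <;> linarith [abs_nonneg (β n)]
        _ ≤ d₁ := by rw [hd₁]; linarith [abs_nonneg ξ]
        _ ≤ d₁ * ((n:ℝ)+1)^t := le_mul_of_one_le_right hd₁pos.le h1
    · calc |β n| ≤ C0 := by linarith [abs_nonneg (α n)]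
        _ ≤ d₁ := by rw [hd₁]; linarith [abs_nonneg ξ]
        _ ≤ d₁ * ((n:ℝ)+1)^t := le_mul_of_one_le_right hd₁pos.le h1


lemma Dlower (α ξe : ℕ → ℝ) (ξ t : ℝ) (hξ : ξ ≠ 0) (ht0 : 0 ≤ t) (ht1 : t ≤ 1)
    (hα : ∀ n, α n = ξ * (n : ℝ) ^ t * (1 + ξe n))
    (hξe : Tendsto ξe atTop (nhds 0))
    (g : ℕ → ℝ) (hg : ∀ j, α j ^ 2 ≤ g j) (hg0 : ∀ j, 0 ≤ g j) :
    ∃ N : ℕ, ∀ n : ℕ, N ≤ n →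
      ξ^2/128 * ((n:ℝ)^t)^2 ≤ (1/(n:ℝ)) * ∑ j ∈ Finset.range n, g j := by
  obtain ⟨N0, hN0⟩ := Metric.tendsto_atTop.mp hξe (1/2) (by norm_num)
  refine ⟨2*N0 + 2, fun n hn => ?_⟩
  set m := n / 2 with hm
  have hn2 : 2 ≤ n := by omega
  have hn0 : (0:ℝ) < (n:ℝ) := by positivity
  have hnt0 : (0:ℝ) ≤ (n:ℝ)^t := Real.rpow_nonneg hn0.le t
  -- real bound  n/4 ≤ m
  have hm4 : (n:ℝ)/4 ≤ (m:ℝ) := by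
    have h : n ≤ m * 4 := by omega
    have := (Nat.cast_le (α := ℝ)).mpr h
    push_cast at this
    linarith
  -- per-term bound
  have hterm : ∀ j ∈ Finset.Ico m n, ξ^2/64 * ((n:ℝ)^t)^2 ≤ g j := by
    intro j hj
    rw [Finset.mem_Ico] at hj
    have hjN0 : N0 ≤ j := by omega
    have hd : |ξe j| < 1/2 := by
      have := hN0 j hjN0
      rwa [Real.dist_eq, sub_zero] at this
    have hsq : (1/4 : ℝ) ≤ (1 + ξe j)^2 := by
      have := abs_lt.mp hd
      nlinarith [this.1, this.2]
    have hjm : (m:ℝ) ≤ (j:ℝ) := Nat.cast_le.mpr hj.1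
    have hjt : (n:ℝ)^t/4 ≤ (j:ℝ)^t := by
      have h1 : ((n:ℝ)/4)^t ≤ (j:ℝ)^t :=
        Real.rpow_le_rpow (by positivity) (by linarith) ht0
      have h2 : (n:ℝ)^t/4 ≤ ((n:ℝ)/4)^t := by
        rw [Real.div_rpow hn0.le (by norm_num)]
        have h4 : (4:ℝ)^t ≤ 4 := by
          calc (4:ℝ)^t ≤ (4:ℝ)^(1:ℝ) := Real.rpow_le_rpow_of_exponent_le (by norm_num) ht1
            _ = 4 := Real.rpow_one 4
        have h4pos : (0:ℝ) < (4:ℝ)^t := Real.rpow_pos_of_pos (by norm_num) t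
        have hn4 : (0:ℝ) ≤ (n:ℝ)^t := hnt0
        rw [div_le_div_iff₀ (by norm_num) h4pos]
        nlinarith
      linarith
    have hjt0 : (0:ℝ) ≤ (j:ℝ)^t := Real.rpow_nonneg (Nat.cast_nonneg j) t
    have hαj : ξ^2/4 * ((j:ℝ)^t)^2 ≤ α j ^ 2 := by
      rw [hα j]
      have : (ξ * (j:ℝ)^t * (1 + ξe j))^2 = ξ^2 * ((j:ℝ)^t)^2 * (1 + ξe j)^2 := by ring
      rw [this]
      nlinarith [sq_nonneg ξ, sq_nonneg ((j:ℝ)^t)]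
    have h3 : ξ^2/64 * ((n:ℝ)^t)^2 ≤ ξ^2/4 * ((j:ℝ)^t)^2 := by
      have : ((n:ℝ)^t/4)^2 ≤ ((j:ℝ)^t)^2 := by nlinarith
      nlinarith [sq_nonneg ξ]
    linarith [hg j]
  -- sum bound
  have hsum1 : ((n - m : ℕ):ℝ) * (ξ^2/64 * ((n:ℝ)^t)^2) ≤ ∑ j ∈ Finset.Ico m n, g j := by
    have := Finset.sum_le_sum hterm
    simpa [Finset.sum_const, Nat.card_Ico, nsmul_eq_mul] using this
  have hsum2 : ∑ j ∈ Finset.Ico m n, g j ≤ ∑ j ∈ Finset.range n, g j := by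
    rw [Finset.range_eq_Ico]
    exact Finset.sum_le_sum_of_subset_of_nonneg
      (Finset.Ico_subset_Ico (Nat.zero_le m) le_rfl) (fun i _ _ => hg0 i)
  have hnm : (n:ℝ)/2 ≤ ((n - m : ℕ):ℝ) := by
    have h : n ≤ (n - m) * 2 := by omega
    have := (Nat.cast_le (α := ℝ)).mpr h
    push_cast at this
    linarith
  have hc : (0:ℝ) ≤ ξ^2/64 * ((n:ℝ)^t)^2 := by positivity
  have key : (n:ℝ)/2 * (ξ^2/64 * ((n:ℝ)^t)^2) ≤ ∑ j ∈ Finset.range n, g j := by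
    calc (n:ℝ)/2 * (ξ^2/64 * ((n:ℝ)^t)^2)
        ≤ ((n - m : ℕ):ℝ) * (ξ^2/64 * ((n:ℝ)^t)^2) := by
          exact mul_le_mul_of_nonneg_right hnm hc
      _ ≤ ∑ j ∈ Finset.Ico m n, g j := hsum1
      _ ≤ _ := hsum2
  have := mul_le_mul_of_nonneg_left key (by positivity : (0:ℝ) ≤ 1/(n:ℝ))
  calc ξ^2/128 * ((n:ℝ)^t)^2 = 1/(n:ℝ) * ((n:ℝ)/2 * (ξ^2/64 * ((n:ℝ)^t)^2)) := by
        field_simp; ring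
    _ ≤ _ := this


lemma sq_rpow_half (x : ℝ) (hx : 0 ≤ x) (k : ℕ) : (x^2) ^ ((k:ℝ)/2) = x ^ k := by
  rw [← Real.rpow_natCast x 2, ← Real.rpow_mul hx, ← Real.rpow_natCast x k]
  congr 1
  ring

lemma rpow_pow (x : ℝ) (hx : 0 ≤ x) (t : ℝ) (k : ℕ) : (x ^ t) ^ k = x ^ (t * k) := by
  rw [← Real.rpow_natCast (x ^ t) k, ← Real.rpow_mul hx]

theorem rough_moment_estimate
    (ϖ : ℝ → ℝ) (hϖ : ∀ x, 0 ≤ ϖ x)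
    (hint : ∀ q : Polynomial ℝ, Integrable (fun x => q.eval x * ϖ x))
    (p : ℕ → Polynomial ℝ)
    (hdeg : ∀ n, (p n).natDegree = n)
    (horth : ∀ m n, (∫ x : ℝ, (p m).eval x * (p n).eval x * ϖ x)
      = if m = n then 1 else 0)
    (α β : ℕ → ℝ)
    (hrec : ∀ n, Polynomial.X * p n =
      Polynomial.C (α n) * p (n + 1) + Polynomial.C (β n) * p n +
        (if n = 0 then 0 else Polynomial.C (α (n - 1)) * p (n - 1)))
    -- exponential growth conditions
    (ξ ζ t : ℝ) (hξ : ξ ≠ 0) (hζ : 0 ≤ ζ) (ht0 : 0 ≤ t) (ht1 : t ≤ 1)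
    (ξe ζe ηe : ℕ → ℝ)
    (hα : ∀ n, α n = ξ * (n : ℝ) ^ t * (1 + ξe n))
    (hβ : ∀ n, β n = ζ * (n : ℝ) ^ t * (1 + ζe n) + ηe n)
    (hξe : Tendsto ξe atTop (nhds 0))
    (hζe : Tendsto ζe atTop (nhds 0))
    (hηe : Tendsto ηe atTop (nhds 0))
    (D : ℕ → ℝ)
    (hD : ∀ n, D n = (1 / (n : ℝ)) *
      ∑ j ∈ Finset.range n, ∫ x : ℝ, x ^ 2 * (p j).eval x ^ 2 * ϖ x)
    (M : ℕ → ℕ → ℝ)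
    (hM : ∀ n k, M n k = (1 / ((n : ℝ) * D n ^ ((k : ℝ) / 2))) *
      ∑ j ∈ Finset.range n, ∫ x : ℝ, x ^ k * (p j).eval x ^ 2 * ϖ x) :
    ∃ d₀ : ℝ, 0 < d₀ ∧ ∀ ε : ℝ, 0 < ε → ∃ K₀ : ℕ, ∀ k n : ℕ,
      K₀ ≤ k → K₀ ≤ n → |M n k| ≤ d₀ ^ k * (ε * k) ^ ((k : ℝ) * t) := by
  have hbase : ∀ j m, cInt ϖ p 0 j m = if j = m then 1 else 0 :=
    fun j m => cInt_zero ϖ p horth j m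
  have hstep : ∀ j k m, cInt ϖ p (k+1) j m = α m * cInt ϖ p k j (m+1) +
      β m * cInt ϖ p k j m +
      (if m = 0 then 0 else α (m-1) * cInt ϖ p k j (m-1)) :=
    fun j k m => cInt_rec ϖ hint p α β hrec k j m
  have hck : ∀ (k j : ℕ), (∫ x : ℝ, x ^ k * (p j).eval x ^ 2 * ϖ x) = cInt ϖ p k j j := by
    intro k j
    unfold cInt
    congr 1
    funext x
    simp only [Polynomial.eval_mul, Polynomial.eval_pow, Polynomial.eval_X]
    ring
  obtain ⟨d₁, hd₁, hd₁b⟩ := coeff_bound α β ξe ζe ηe ξ ζ t ht0 hζ hα hβ hξe hζe hηe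
  set g : ℕ → ℝ := fun j => ∫ x : ℝ, x ^ 2 * (p j).eval x ^ 2 * ϖ x with hgdef
  have hg2 : ∀ j, g j = α j ^ 2 + β j ^ 2 + (if j = 0 then 0 else α (j-1) ^ 2) := by
    intro j
    have : g j = cInt ϖ p 2 j j := hck 2 j
    rw [this]
    exact ctwo (cInt ϖ p) α β j (hbase j) (hstep j)
  have hg : ∀ j, α j ^ 2 ≤ g j := by
    intro j; rw [hg2 j]
    have h1 : (0:ℝ) ≤ if j = 0 then 0 else α (j-1)^2 := by
      split
      · exact le_rfl
      · positivity
    linarith [sq_nonneg (β j)]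
  have hg0 : ∀ j, 0 ≤ g j := fun j => le_trans (sq_nonneg _) (hg j)
  obtain ⟨ND, hND⟩ := Dlower α ξe ξ t hξ ht0 ht1 hα hξe g hg hg0
  have hDlow : ∀ n, ND ≤ n → ξ^2/128 * ((n:ℝ)^t)^2 ≤ D n := by
    intro n hn
    rw [hD n]
    exact hND n hn
  set s := Real.sqrt (ξ^2/128) with hs
  have hspos : 0 < s := Real.sqrt_pos.mpr (by positivity)
  have hssq : s^2 = ξ^2/128 := Real.sq_sqrt (by positivity)
  refine ⟨3*d₁/s + 1, by positivity, ?_⟩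
  intro ε hε
  refine ⟨max (max ND 1) ⌈2/ε⌉₊, ?_⟩
  intro k n hk hn
  have hk1 : 1 ≤ k := le_trans (le_trans (le_max_right _ _) (le_max_left _ _)) hk
  have hn1 : 1 ≤ n := le_trans (le_trans (le_max_right _ _) (le_max_left _ _)) hn
  have hnND : ND ≤ n := le_trans (le_trans (le_max_left _ _) (le_max_left _ _)) hn
  have hkε : 2/ε ≤ (k:ℝ) :=
    le_trans (Nat.le_ceil _) (Nat.cast_le.mpr (le_trans (le_max_right _ _) hk))
  have hnε : 2/ε ≤ (n:ℝ) :=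
    le_trans (Nat.le_ceil _) (Nat.cast_le.mpr (le_trans (le_max_right _ _) hn))
  have hn0 : (0:ℝ) < (n:ℝ) := by
    have : (1:ℝ) ≤ (n:ℝ) := by exact_mod_cast hn1
    linarith
  have hk0 : (0:ℝ) < (k:ℝ) := by
    have : (1:ℝ) ≤ (k:ℝ) := by exact_mod_cast hk1
    linarith
  have hnt : (0:ℝ) < (n:ℝ)^t := Real.rpow_pos_of_pos hn0 t
  have hDpos : 0 < D n := lt_of_lt_of_le (by positivity) (hDlow n hnND)
  have hPpos : 0 < D n ^ ((k:ℝ)/2) := Real.rpow_pos_of_pos hDpos _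
  set A := d₁ * ((n + k : ℕ):ℝ)^t with hA
  have hA0 : 0 ≤ A := by positivity
  have hcb : ∀ j, j < n → |cInt ϖ p k j j| ≤ (3*A)^k := by
    intro j hj
    refine cbound (cInt ϖ p) α β j k (hbase j) (hstep j) A hA0 ?_ k le_rfl j
    intro i hi
    have hcast : ((i:ℝ)+1) ≤ ((n+k:ℕ):ℝ) := by
      have h : i + 1 ≤ n + k := by omega
      have := (Nat.cast_le (α := ℝ)).mpr h
      push_cast at this ⊢
      linarith
    have hrp : ((i:ℝ)+1)^t ≤ ((n+k:ℕ):ℝ)^t :=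
      Real.rpow_le_rpow (by positivity) hcast ht0
    obtain ⟨h1, h2⟩ := hd₁b i
    constructor
    · exact le_trans h1 (by rw [hA]; exact mul_le_mul_of_nonneg_left hrp hd₁.le)
    · exact le_trans h2 (by rw [hA]; exact mul_le_mul_of_nonneg_left hrp hd₁.le)
  have hsum : |∑ j ∈ Finset.range n, ∫ x:ℝ, x^k*(p j).eval x^2*ϖ x| ≤ (n:ℝ) * (3*A)^k := by
    calc |∑ j ∈ Finset.range n, ∫ x:ℝ, x^k*(p j).eval x^2*ϖ x|
        ≤ ∑ j ∈ Finset.range n, |∫ x:ℝ, x^k*(p j).eval x^2*ϖ x| :=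
          Finset.abs_sum_le_sum_abs _ _
      _ ≤ ∑ j ∈ Finset.range n, (3*A)^k := by
          refine Finset.sum_le_sum (fun j hj => ?_)
          rw [hck k j]
          exact hcb j (Finset.mem_range.mp hj)
      _ = (n:ℝ) * (3*A)^k := by
          rw [Finset.sum_const, Finset.card_range, nsmul_eq_mul]
  have hM1 : |M n k| ≤ (3*A)^k / D n ^ ((k:ℝ)/2) := by
    rw [hM n k, abs_mul]
    have h1 : |1/((n:ℝ) * D n ^ ((k:ℝ)/2))| = 1/((n:ℝ) * D n ^ ((k:ℝ)/2)) :=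
      abs_of_pos (by positivity)
    rw [h1]
    calc 1/((n:ℝ) * D n ^ ((k:ℝ)/2)) * |∑ j ∈ Finset.range n, ∫ x:ℝ, x^k*(p j).eval x^2*ϖ x|
        ≤ 1/((n:ℝ) * D n ^ ((k:ℝ)/2)) * ((n:ℝ) * (3*A)^k) :=
          mul_le_mul_of_nonneg_left hsum (by positivity)
      _ = (3*A)^k / D n ^ ((k:ℝ)/2) := by
          field_simp
  have hP : (s * (n:ℝ)^t)^k ≤ D n ^ ((k:ℝ)/2) := by
    have h1 : ((s*(n:ℝ)^t)^2) ^ ((k:ℝ)/2) ≤ D n ^ ((k:ℝ)/2) := by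
      apply Real.rpow_le_rpow (by positivity) _ (by positivity)
      calc (s*(n:ℝ)^t)^2 = ξ^2/128 * ((n:ℝ)^t)^2 := by rw [mul_pow, hssq]
        _ ≤ D n := hDlow n hnND
    rwa [sq_rpow_half (s*(n:ℝ)^t) (by positivity) k] at h1
  have hfinal1 : (3*A)^k / D n ^ ((k:ℝ)/2) ≤ (3*A)^k / (s*(n:ℝ)^t)^k := by
    gcongr
  have hAq : (3*A)^k / (s*(n:ℝ)^t)^k = (3*d₁/s)^k * ((((n+k:ℕ):ℝ)/(n:ℝ))^t)^k := by
    rw [← div_pow, ← mul_pow]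
    congr 1
    rw [hA, Real.div_rpow (by positivity) hn0.le]
    field_simp
  have h2k : 2 ≤ ε*(k:ℝ) := by
    rw [div_le_iff₀ hε] at hkε
    linarith
  have h2n : 2 ≤ ε*(n:ℝ) := by
    rw [div_le_iff₀ hε] at hnε
    linarith
  have hq : ((n+k:ℕ):ℝ)/(n:ℝ) ≤ ε * k := by
    rw [div_le_iff₀ hn0]
    push_cast
    nlinarith [mul_le_mul_of_nonneg_right h2k hn0.le,
      mul_le_mul_of_nonneg_right h2n hk0.le]
  have hqt : (((n+k:ℕ):ℝ)/(n:ℝ))^t ≤ (ε*(k:ℝ))^t :=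
    Real.rpow_le_rpow (by positivity) hq ht0
  have hq2 : ((((n+k:ℕ):ℝ)/(n:ℝ))^t)^k ≤ ((ε*(k:ℝ))^t)^k :=
    pow_le_pow_left₀ (by positivity) hqt k
  have hq3 : ((ε*(k:ℝ))^t)^k = (ε*(k:ℝ))^((k:ℝ)*t) := by
    rw [rpow_pow (ε*(k:ℝ)) (by positivity) t k, mul_comm t ((k:ℝ))]
  have hd0 : (0:ℝ) ≤ 3*d₁/s := by positivity
  calc |M n k| ≤ (3*A)^k / D n ^ ((k:ℝ)/2) := hM1
    _ ≤ (3*A)^k / (s*(n:ℝ)^t)^k := hfinal1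
    _ = (3*d₁/s)^k * ((((n+k:ℕ):ℝ)/(n:ℝ))^t)^k := hAq
    _ ≤ (3*d₁/s)^k * ((ε*(k:ℝ))^t)^k :=
        mul_le_mul_of_nonneg_left hq2 (by positivity)
    _ = (3*d₁/s)^k * (ε*(k:ℝ))^((k:ℝ)*t) := by rw [hq3]
    _ ≤ (3*d₁/s + 1)^k * (ε*(k:ℝ))^((k:ℝ)*t) := by
        apply mul_le_mul_of_nonneg_right
          (pow_le_pow_left₀ hd0 (by linarith) k)
          (Real.rpow_nonneg (by positivity) _)
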